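/- arXiv:2111.09134 — 3 statements merged into one kernel-verified Lean document; each statement's English description precedes it below -/
import Mathlib

section
/- (Tangent space of the base locus along the component B₃.) Let n ≥ 1, let F₁ and F₃ be linearly independent linear forms in MvPolynomial (Fin (n+1)) ℂ, let μ ∈ ℂ, and let F'₁, F'₂ be linear forms. Then, in the module of Kähler differentials Ω_{K/ℂ} of the rational function field K, one has μ·( F₃⁻¹ D(F₃) − F₁⁻¹ D(F₁) ) + D( (F'₁ − F'₂)/F₁ ) = 0 if and only if μ = 0 and F₁ divides F'₁ − F'₂ in MvPolynomial (Fin (n+1)) ℂ. -/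
open MvPolynomial

/-- The field of rational functions in `x₀, …, x_n` over `ℂ`. -/
noncomputable abbrev RatFunField (n : ℕ) : Type :=
  FractionRing (MvPolynomial (Fin (n + 1)) ℂ)

/-- The canonical embedding of polynomials into the rational function field. -/
noncomputable abbrev toRat (n : ℕ) :
    MvPolynomial (Fin (n + 1)) ℂ →+* RatFunField n :=
  algebraMap (MvPolynomial (Fin (n + 1)) ℂ) (RatFunField n)

/-- The universal derivation `D : K → Ω_{K/ℂ}`. -/
noncomputable abbrev ratD (n : ℕ) :
    RatFunField n →ₗ[ℂ] KaehlerDifferential ℂ (RatFunField n) :=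
  (KaehlerDifferential.D ℂ (RatFunField n)).toLinearMap


open IsLocalization

section FracDer

variable {R A K : Type*} [CommSemiring R] [CommRing A] [IsDomain A] [Field K]
  [Algebra A K] [IsFractionRing A K] [Algebra R A] [Algebra R K] [IsScalarTower R A K]

noncomputable def fracFn (d : Derivation R A K) (z : K) : K :=
  (algebraMap A K (IsLocalization.sec (nonZeroDivisors A) z).2)⁻¹ *
    (d (IsLocalization.sec (nonZeroDivisors A) z).1 -
      z * d ((IsLocalization.sec (nonZeroDivisors A) z).2 : A))

lemma fracFn_spec (d : Derivation R A K) (z : K) {a b : A} (hb : b ≠ 0)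
    (h : z * algebraMap A K b = algebraMap A K a) :
    fracFn d z = (algebraMap A K b)⁻¹ * (d a - z * d b) := by
  set p := IsLocalization.sec (nonZeroDivisors A) z with hp
  have hps : z * algebraMap A K (p.2 : A) = algebraMap A K p.1 :=
    IsLocalization.sec_spec (nonZeroDivisors A) z
  have hp2 : (p.2 : A) ≠ 0 := nonZeroDivisors.ne_zero p.2.2
  have hip2 : algebraMap A K (p.2 : A) ≠ 0 :=
    (map_ne_zero_iff _ (IsFractionRing.injective A K)).mpr hp2
  have hib : algebraMap A K b ≠ 0 :=
    (map_ne_zero_iff _ (IsFractionRing.injective A K)).mpr hb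
  have key : p.1 * b = a * (p.2 : A) := by
    apply IsFractionRing.injective A K
    rw [map_mul, map_mul]
    calc algebraMap A K p.1 * algebraMap A K b
        = (z * algebraMap A K (p.2 : A)) * algebraMap A K b := by rw [hps]
      _ = (z * algebraMap A K b) * algebraMap A K (p.2 : A) := by ring
      _ = algebraMap A K a * algebraMap A K (p.2 : A) := by rw [h]
  have keyd := congrArg d key
  rw [Derivation.leibniz, Derivation.leibniz] at keyd
  simp only [Algebra.smul_def] at keyd
  unfold fracFn
  rw [← hp]
  field_simp
  linear_combination keyd + d b * hps - d (p.2 : A) * h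

set_option maxHeartbeats 1000000 in
noncomputable def fracDer (d : Derivation R A K) : Derivation R K K where
  toFun := fracFn d
  map_add' x y := by
    obtain ⟨a, b, hb, rfl⟩ := IsFractionRing.div_surjective (A := A) x
    obtain ⟨c, e, he, rfl⟩ := IsFractionRing.div_surjective (A := A) y
    have hb0 : b ≠ 0 := nonZeroDivisors.ne_zero hb
    have he0 : e ≠ 0 := nonZeroDivisors.ne_zero he
    have hib : algebraMap A K b ≠ 0 :=
      (map_ne_zero_iff _ (IsFractionRing.injective A K)).mpr hb0
    have hie : algebraMap A K e ≠ 0 :=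
      (map_ne_zero_iff _ (IsFractionRing.injective A K)).mpr he0
    have hx : (algebraMap A K a) / (algebraMap A K b) * (algebraMap A K b) = algebraMap A K a := by
      field_simp
    have hy : (algebraMap A K c) / (algebraMap A K e) * (algebraMap A K e) = algebraMap A K c := by
      field_simp
    have hxy : ((algebraMap A K a) / (algebraMap A K b) + (algebraMap A K c) / (algebraMap A K e)) *
        algebraMap A K (b * e) = algebraMap A K (a * e + c * b) := by
      rw [map_mul, map_add, map_mul, map_mul]
      field_simp
    show fracFn d _ = fracFn d _ + fracFn d _
    rw [fracFn_spec d _ (mul_ne_zero hb0 he0) hxy, fracFn_spec d _ hb0 hx,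
      fracFn_spec d _ he0 hy]
    rw [map_add d, Derivation.leibniz, Derivation.leibniz, Derivation.leibniz, map_mul]
    simp only [Algebra.smul_def]
    field_simp
    ring
  map_smul' r x := by
    obtain ⟨a, b, hb, rfl⟩ := IsFractionRing.div_surjective (A := A) x
    have hb0 : b ≠ 0 := nonZeroDivisors.ne_zero hb
    have hib : algebraMap A K b ≠ 0 :=
      (map_ne_zero_iff _ (IsFractionRing.injective A K)).mpr hb0
    have hx : (algebraMap A K a) / (algebraMap A K b) * (algebraMap A K b) = algebraMap A K a := by
      field_simp
    have hrx : (r • ((algebraMap A K a) / (algebraMap A K b))) * algebraMap A K b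
        = algebraMap A K (r • a) := by
      rw [smul_mul_assoc, hx, Algebra.smul_def, Algebra.smul_def, map_mul,
        ← IsScalarTower.algebraMap_apply]
    show fracFn d (r • _) = r • fracFn d _
    rw [fracFn_spec d _ hb0 hrx, fracFn_spec d _ hb0 hx, Derivation.map_smul]
    simp only [smul_mul_assoc, ← smul_sub, mul_smul_comm]
  map_one_eq_zero' := by
    show fracFn d 1 = 0
    rw [fracFn_spec d 1 one_ne_zero (a := 1) (by simp)]
    simp
  leibniz' x y := by
    obtain ⟨a, b, hb, rfl⟩ := IsFractionRing.div_surjective (A := A) x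
    obtain ⟨c, e, he, rfl⟩ := IsFractionRing.div_surjective (A := A) y
    have hb0 : b ≠ 0 := nonZeroDivisors.ne_zero hb
    have he0 : e ≠ 0 := nonZeroDivisors.ne_zero he
    have hib : algebraMap A K b ≠ 0 :=
      (map_ne_zero_iff _ (IsFractionRing.injective A K)).mpr hb0
    have hie : algebraMap A K e ≠ 0 :=
      (map_ne_zero_iff _ (IsFractionRing.injective A K)).mpr he0
    have hx : (algebraMap A K a) / (algebraMap A K b) * (algebraMap A K b) = algebraMap A K a := by
      field_simp
    have hy : (algebraMap A K c) / (algebraMap A K e) * (algebraMap A K e) = algebraMap A K c := by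
      field_simp
    have hxy : ((algebraMap A K a) / (algebraMap A K b) * ((algebraMap A K c) / (algebraMap A K e))) *
        algebraMap A K (b * e) = algebraMap A K (a * c) := by
      rw [map_mul, map_mul]
      field_simp
      
    show fracFn d _ = _ • fracFn d _ + _ • fracFn d _
    rw [fracFn_spec d _ (mul_ne_zero hb0 he0) hxy, fracFn_spec d _ hb0 hx,
      fracFn_spec d _ he0 hy]
    rw [Derivation.leibniz, Derivation.leibniz]
    simp only [Algebra.smul_def, smul_eq_mul, Algebra.algebraMap_self_apply, map_mul]
    field_simp
    ring

@[simp]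
lemma fracDer_algebraMap (d : Derivation R A K) (a : A) :
    fracDer d (algebraMap A K a) = d a := by
  have h : fracDer d (algebraMap A K a) = fracFn d (algebraMap A K a) := rfl
  rw [h, fracFn_spec d _ one_ne_zero (a := a) (b := 1) (by simp)]
  simp

end FracDer


lemma degree_one_single {σ : Type*} (m : σ →₀ ℕ) (h : Finsupp.degree m = 1) :
    ∃ j, m = Finsupp.single j 1 := by
  classical
  have hne : m ≠ 0 := by
    rintro rfl
    simp [map_zero] at h
  obtain ⟨j, hj⟩ := Finsupp.support_nonempty_iff.mpr hne
  refine ⟨j, ?_⟩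
  have hj1 : 1 ≤ m j := Nat.one_le_iff_ne_zero.mpr (Finsupp.mem_support_iff.mp hj)
  have hle : m j ≤ 1 := h ▸ Finsupp.le_degree j m
  have hmj : m j = 1 := le_antisymm hle hj1
  ext i
  rcases eq_or_ne i j with rfl | hij
  · simp [hmj]
  · rw [Finsupp.single_eq_of_ne' (Ne.symm hij)]
    by_contra hi0
    have hi : i ∈ m.support := Finsupp.mem_support_iff.mpr hi0
    have hsub : ({i, j} : Finset σ) ⊆ m.support := by
      intro x hx
      simp only [Finset.mem_insert, Finset.mem_singleton] at hx
      rcases hx with rfl | rfl <;> assumption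
    have h2 : m i + m j ≤ Finsupp.degree m := by
      rw [Finsupp.degree, ← Finset.sum_pair hij]
      exact Finset.sum_le_sum_of_subset hsub
    have : 1 ≤ m i := Nat.one_le_iff_ne_zero.mpr hi0
    omega

lemma linear_decomp {σ : Type*} [Fintype σ] [DecidableEq σ] {F : MvPolynomial σ ℂ}
    (hF : F.IsHomogeneous 1) :
    F = ∑ i, MvPolynomial.C (F.coeff (Finsupp.single i 1)) * MvPolynomial.X i := by
  apply MvPolynomial.ext
  intro m
  rw [MvPolynomial.coeff_sum]
  by_cases hm : Finsupp.degree m = 1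
  · obtain ⟨j, rfl⟩ := degree_one_single m hm
    rw [Finset.sum_eq_single j]
    · simp [coeff_C_mul, MvPolynomial.coeff_X']
    · intro i _ hij
      simp [coeff_C_mul, MvPolynomial.coeff_X',
        (Finsupp.single_left_injective one_ne_zero).ne hij]
    · intro h; exact absurd (Finset.mem_univ j) h
  · rw [hF.coeff_eq_zero hm]
    refine (Finset.sum_eq_zero fun i _ => ?_).symm
    rw [coeff_C_mul, MvPolynomial.coeff_X']
    rw [if_neg]
    · ring
    · intro hsi
      apply hm
      rw [← hsi]
      simp [Finsupp.degree_single]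

lemma eval_linear {σ : Type*} [Fintype σ] [DecidableEq σ] (v : σ → ℂ) {F : MvPolynomial σ ℂ}
    (hF : F.IsHomogeneous 1) :
    MvPolynomial.eval v F = ∑ i, F.coeff (Finsupp.single i 1) * v i := by
  conv_lhs => rw [linear_decomp hF]
  simp

lemma exists_dual {N : Type*} [Fintype N] [DecidableEq N] (c₁ c₃ : N → ℂ)
    (h : LinearIndependent ℂ ![c₁, c₃]) :
    ∃ v : N → ℂ, ∑ i, c₁ i * v i = 0 ∧ ∑ i, c₃ i * v i = 1 := by
  have hpair := LinearIndependent.pair_iff.mp h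
  let f : (Fin 2 → ℂ) →ₗ[ℂ] (N → ℂ) :=
    { toFun := fun s => s 0 • c₁ + s 1 • c₃
      map_add' := by intro x y; simp [add_smul]; abel
      map_smul' := by intro r x; simp [smul_smul, smul_add] }
  have hinj : Function.Injective f := by
    rw [← LinearMap.ker_eq_bot]
    rw [LinearMap.ker_eq_bot']
    intro s hs
    obtain ⟨h0, h1⟩ := hpair (s 0) (s 1) hs
    funext i
    fin_cases i <;> assumption
  obtain ⟨g, hg⟩ := LinearMap.exists_leftInverse_of_injective f (LinearMap.ker_eq_bot.mpr hinj)
  set φ : (N → ℂ) →ₗ[ℂ] ℂ := (LinearMap.proj 1).comp g with hφ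
  have hfc₁ : f ![1, 0] = c₁ := by simp [f]
  have hfc₃ : f ![0, 1] = c₃ := by simp [f]
  have hφc₁ : φ c₁ = 0 := by
    rw [← hfc₁, hφ, LinearMap.comp_apply, ← LinearMap.comp_apply g f, hg]
    simp
  have hφc₃ : φ c₃ = 1 := by
    rw [← hfc₃, hφ, LinearMap.comp_apply, ← LinearMap.comp_apply g f, hg]
    simp
  have hsum : ∀ c : N → ℂ, (∑ i, c i * φ (Pi.single i 1)) = φ c := by
    intro c
    have hc : c = ∑ i, c i • (Pi.single i (1 : ℂ) : N → ℂ) := by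
      funext j
      rw [Finset.sum_apply]
      simp [Pi.single_apply]
    conv_rhs => rw [hc]
    rw [map_sum]
    simp [smul_eq_mul]
  exact ⟨fun i => φ (Pi.single i 1), (hsum c₁).trans hφc₁, (hsum c₃).trans hφc₃⟩

lemma exists_dual_single {N : Type*} [Fintype N] [DecidableEq N] (c₁ : N → ℂ) (h : c₁ ≠ 0) :
    ∃ v : N → ℂ, ∑ i, c₁ i * v i = 1 := by
  obtain ⟨j, hj⟩ : ∃ j, c₁ j ≠ 0 := by
    by_contra hc
    push_neg at hc
    exact h (funext hc)
  refine ⟨Pi.single j (c₁ j)⁻¹, ?_⟩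
  rw [Finset.sum_eq_single j]
  · simp [Pi.single_apply, hj]
  · intro i _ hij; simp [Pi.single_apply, hij]
  · intro hh; exact absurd (Finset.mem_univ j) hh


lemma homog_dvd_linear {σ : Type*} {F G : MvPolynomial σ ℂ} (hF : F.IsHomogeneous 1)
    (hG : G.IsHomogeneous 1) (h : F ∣ G) : ∃ c : ℂ, G = MvPolynomial.C c * F := by
  obtain ⟨h', rfl⟩ := h
  refine ⟨h'.coeff 0, ?_⟩
  have h1 : homogeneousComponent 1 (F * h') = F * h' := by
    rw [homogeneousComponent_of_mem ((mem_homogeneousSubmodule _ _).mpr hG)]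
    simp
  have h2 : F * h' = ∑ k ∈ Finset.range (h'.totalDegree + 1), F * homogeneousComponent k h' := by
    rw [← Finset.mul_sum, sum_homogeneousComponent]
  calc F * h' = homogeneousComponent 1 (F * h') := h1.symm
    _ = ∑ k ∈ Finset.range (h'.totalDegree + 1),
          homogeneousComponent 1 (F * homogeneousComponent k h') := by
        conv_lhs => rw [h2]
        rw [map_sum]
    _ = F * homogeneousComponent 0 h' := ?_
    _ = MvPolynomial.C (h'.coeff 0) * F := by rw [homogeneousComponent_zero, mul_comm]
  rw [Finset.sum_eq_single 0]
  · rw [homogeneousComponent_of_mem ((mem_homogeneousSubmodule _ _).mpr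
      (hF.mul (homogeneousComponent_isHomogeneous 0 h')))]
    norm_num
  · intro k _ hk
    rw [homogeneousComponent_of_mem ((mem_homogeneousSubmodule _ _).mpr
      (hF.mul (homogeneousComponent_isHomogeneous k h')))]
    rw [if_neg (by omega)]
  · intro hh
    simp at hh

lemma fracDer_spec {R A K : Type*} [CommSemiring R] [CommRing A] [IsDomain A] [Field K]
    [Algebra A K] [IsFractionRing A K] [Algebra R A] [Algebra R K] [IsScalarTower R A K]
    (d : Derivation R A K) (z : K) {a b : A} (hb : b ≠ 0)
    (h : z * algebraMap A K b = algebraMap A K a) :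
    fracDer d z = (algebraMap A K b)⁻¹ * (d a - z * d b) := fracFn_spec d z hb h

set_option synthInstance.maxHeartbeats 1000000 in
open MvPolynomial in
lemma mkDer_linear (n : ℕ) (v : Fin (n + 1) → ℂ) {F : MvPolynomial (Fin (n + 1)) ℂ}
    (hF : F.IsHomogeneous 1) :
    MvPolynomial.mkDerivation ℂ (fun i => algebraMap ℂ (RatFunField n) (v i)) F =
      algebraMap ℂ (RatFunField n) (MvPolynomial.eval v F) := by
  have hsm : ∀ (c : ℂ) (x : RatFunField n), c • x = algebraMap ℂ (RatFunField n) c * x :=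
    fun c x => Algebra.smul_def c x
  conv_lhs => rw [linear_decomp hF]
  rw [eval_linear v hF, map_sum, map_sum]
  refine Finset.sum_congr rfl fun i _ => ?_
  rw [MvPolynomial.C_mul', Derivation.map_smul, mkDerivation_X,
    map_mul (algebraMap ℂ (RatFunField n))]
  exact hsm _ _

set_option maxHeartbeats 2000000 in
set_option synthInstance.maxHeartbeats 1000000 in
open MvPolynomial in
/-- tangent space of the base locus along the component `B₃`.
For linearly independent linear forms `F₁, F₃`, `μ ∈ ℂ` and linear forms `F'₁, F'₂`:
`μ • (F₃⁻¹ • D F₃ − F₁⁻¹ • D F₁) + D ((F'₁ − F'₂)/F₁) = 0` in `Ω_{K/ℂ}` iff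
`μ = 0` and `F₁ ∣ F'₁ − F'₂`. -/
theorem stmt_7 (n : ℕ) (hn : 1 ≤ n)
    (F₁ F₃ F'₁ F'₂ : MvPolynomial (Fin (n + 1)) ℂ)
    (hF₁ : F₁.IsHomogeneous 1) (hF₃ : F₃.IsHomogeneous 1)
    (hindep : LinearIndependent ℂ ![F₁, F₃])
    (hF'₁ : F'₁.IsHomogeneous 1) (hF'₂ : F'₂.IsHomogeneous 1)
    (μ : ℂ) :
    μ • ((toRat n F₃)⁻¹ • ratD n (toRat n F₃) - (toRat n F₁)⁻¹ • ratD n (toRat n F₁)) +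
        ratD n (toRat n (F'₁ - F'₂) / toRat n F₁) = 0 ↔
      μ = 0 ∧ F₁ ∣ F'₁ - F'₂ := by
  classical
  have hinj : Function.Injective (toRat n) := IsFractionRing.injective _ _
  set G : MvPolynomial (Fin (n + 1)) ℂ := F'₁ - F'₂ with hGdef
  have hGhom : G.IsHomogeneous 1 := hF'₁.sub hF'₂
  have hpair : ∀ s t : ℂ, s • F₁ + t • F₃ = 0 → s = 0 ∧ t = 0 :=
    LinearIndependent.pair_iff.mp hindep
  have hF₁0 : F₁ ≠ 0 := by
    intro h
    exact one_ne_zero (hpair 1 0 (by simp [h])).1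
  have hiF₁ : toRat n F₁ ≠ 0 := (map_ne_zero_iff _ hinj).mpr hF₁0
  have hF₃0 : F₃ ≠ 0 := by
    intro h
    exact one_ne_zero (hpair 0 1 (by simp [h])).2
  have hiF₃ : toRat n F₃ ≠ 0 := (map_ne_zero_iff _ hinj).mpr hF₃0
  have hsmul : ∀ (c : ℂ) (x : RatFunField n), c • x = algebraMap ℂ (RatFunField n) c * x :=
    fun c x => Algebra.smul_def c x
  have hCmap : ∀ c : ℂ, toRat n (MvPolynomial.C c) = algebraMap ℂ (RatFunField n) c :=
    fun c => (IsScalarTower.algebraMap_apply ℂ _ _ c).symm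
  have hdiv : (toRat n G / toRat n F₁) * toRat n F₁ = toRat n G := div_mul_cancel₀ _ hiF₁
  -- main computation for each direction vector v
  have key : ∀ v : Fin (n + 1) → ℂ,
      (μ • ((toRat n F₃)⁻¹ • ratD n (toRat n F₃) - (toRat n F₁)⁻¹ • ratD n (toRat n F₁)) +
        ratD n (toRat n G / toRat n F₁) = 0) →
      μ • ((toRat n F₃)⁻¹ * algebraMap ℂ (RatFunField n) (MvPolynomial.eval v F₃) -
            (toRat n F₁)⁻¹ * algebraMap ℂ (RatFunField n) (MvPolynomial.eval v F₁)) +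
          (toRat n F₁)⁻¹ * (algebraMap ℂ (RatFunField n) (MvPolynomial.eval v G) -
            (toRat n G / toRat n F₁) * algebraMap ℂ (RatFunField n) (MvPolynomial.eval v F₁))
        = 0 := by
    intro v hEq
    set d := MvPolynomial.mkDerivation ℂ (fun i => algebraMap ℂ (RatFunField n) (v i)) with hd
    set δ := fracDer d with hδ
    have happ := congrArg δ.liftKaehlerDifferential hEq
    rw [map_add, map_zero, LinearMap.map_smul_of_tower, LinearMap.map_sub,
      LinearMap.map_smul, LinearMap.map_smul] at happ
    have hD : ∀ x : RatFunField n, δ.liftKaehlerDifferential (ratD n x) = δ x := fun x =>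
      Derivation.liftKaehlerDifferential_comp_D δ x
    rw [hD, hD, hD] at happ
    have h3 : δ (toRat n F₃) = algebraMap ℂ (RatFunField n) (MvPolynomial.eval v F₃) := by
      rw [hδ, fracDer_algebraMap, hd, mkDer_linear n v hF₃]
    have h1 : δ (toRat n F₁) = algebraMap ℂ (RatFunField n) (MvPolynomial.eval v F₁) := by
      rw [hδ, fracDer_algebraMap, hd, mkDer_linear n v hF₁]
    have hq : δ (toRat n G / toRat n F₁) =
        (toRat n F₁)⁻¹ * (algebraMap ℂ (RatFunField n) (MvPolynomial.eval v G) -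
          (toRat n G / toRat n F₁) * algebraMap ℂ (RatFunField n) (MvPolynomial.eval v F₁)) := by
      rw [hδ, fracDer_spec d _ hF₁0 hdiv, hd, mkDer_linear n v hGhom, mkDer_linear n v hF₁]
    rw [h3, h1, hq, smul_eq_mul, smul_eq_mul] at happ
    exact happ
  constructor
  · intro hEq
    -- coefficient vectors
    set c₁ : Fin (n + 1) → ℂ := fun i => F₁.coeff (Finsupp.single i 1) with hc₁
    set c₃ : Fin (n + 1) → ℂ := fun i => F₃.coeff (Finsupp.single i 1) with hc₃
    have hcindep : LinearIndependent ℂ ![c₁, c₃] := by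
      rw [LinearIndependent.pair_iff]
      intro s t hst
      apply hpair s t
      have hdec : s • F₁ + t • F₃ =
          ∑ i, MvPolynomial.C ((s • c₁ + t • c₃) i) * MvPolynomial.X i := by
        conv_lhs => rw [linear_decomp hF₁, linear_decomp hF₃]
        rw [Finset.smul_sum, Finset.smul_sum, ← Finset.sum_add_distrib]
        refine Finset.sum_congr rfl fun i _ => ?_
        simp only [Pi.add_apply, Pi.smul_apply, smul_eq_mul, MvPolynomial.smul_eq_C_mul,
          map_add, map_mul, hc₁, hc₃]
        ring
      rw [hdec, hst]
      simp
    obtain ⟨v, hv1, hv3⟩ := exists_dual c₁ c₃ hcindep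
    have hev1 : MvPolynomial.eval v F₁ = 0 := by rw [eval_linear v hF₁]; exact hv1
    have hev3 : MvPolynomial.eval v F₃ = 1 := by rw [eval_linear v hF₃]; exact hv3
    have hk := key v hEq
    rw [hev1, hev3] at hk
    simp only [map_zero, map_one, mul_zero, mul_one, sub_zero] at hk
    -- hk : μ • (toRat n F₃)⁻¹ + (toRat n F₁)⁻¹ * algebraMap ℂ _ (eval v G) = 0
    have hμ0 : μ = 0 := by
      have hpoly : MvPolynomial.C μ * F₁ + MvPolynomial.C (MvPolynomial.eval v G) * F₃ = 0 := by
        apply hinj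
        rw [map_add, map_mul, map_mul, map_zero, hCmap, hCmap]
        rw [hsmul] at hk
        field_simp at hk
        linear_combination hk
      exact (hpair μ (MvPolynomial.eval v G) (by
        simp only [MvPolynomial.smul_eq_C_mul]; exact hpoly)).1
    refine ⟨hμ0, ?_⟩
    -- second stage
    have hc₁0 : c₁ ≠ 0 := by
      intro h0
      apply hF₁0
      rw [linear_decomp hF₁]
      refine Finset.sum_eq_zero fun i _ => ?_
      have : c₁ i = 0 := by rw [h0]; rfl
      rw [hc₁] at this
      simp only at this
      rw [this]
      simp
    obtain ⟨w, hw⟩ := exists_dual_single c₁ hc₁0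
    have hew1 : MvPolynomial.eval w F₁ = 1 := by rw [eval_linear w hF₁]; exact hw
    have hk2 := key w hEq
    rw [hew1, hμ0, hsmul, map_zero, zero_mul, zero_add, map_one, mul_one] at hk2
    have hq0 : algebraMap ℂ (RatFunField n) (MvPolynomial.eval w G) -
        toRat n G / toRat n F₁ = 0 := by
      exact (mul_eq_zero.mp hk2).resolve_left (inv_ne_zero hiF₁)
    have hGeq : G = MvPolynomial.C (MvPolynomial.eval w G) * F₁ := by
      apply hinj
      rw [map_mul, hCmap]
      have : toRat n G / toRat n F₁ = algebraMap ℂ (RatFunField n) (MvPolynomial.eval w G) :=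
        (sub_eq_zero.mp hq0).symm
      rw [← hdiv, this]
    exact ⟨MvPolynomial.C (MvPolynomial.eval w G), hGeq.trans (mul_comm _ _)⟩
  · rintro ⟨hμ0, hdvd⟩
    obtain ⟨c, hc⟩ := homog_dvd_linear hF₁ hGhom hdvd
    have hz : toRat n G / toRat n F₁ = algebraMap ℂ (RatFunField n) c := by
      rw [hc, map_mul, hCmap, mul_div_assoc, div_self hiF₁, mul_one]
    rw [hμ0, hz, zero_smul, zero_add]
    have : ratD n (algebraMap ℂ (RatFunField n) c) =
        KaehlerDifferential.D ℂ (RatFunField n) (algebraMap ℂ (RatFunField n) c) := rfl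
    rw [this, Derivation.map_algebraMap]
end

section
/- (Key lemma for the second blow-up.) Let n ≥ 1, let F₀ be a nonzero linear form in MvPolynomial (Fin (n+1)) ℂ, let F'₁,F'₂,F'₃ and F̃'₁,F̃'₂,F̃'₃ be linear forms, let λ = (λ₁,λ₂,λ₃) ∈ ℂ³ be nonzero with λ₁+λ₂+λ₃ = 0, let λ', λ̃' ∈ ℂ³ satisfy Σ_i λ'_i = 0 and Σ_i λ̃'_i = 0, and let α ∈ ℂ, α ≠ 0. Assume that in Ω_{K/ℂ}: (i) H₁ := Σ_i λ'_i F₀⁻¹ D(F₀) + D( (Σ_i λ_i F'_i)/F₀ ) = 0, and (ii) Σ_i λ̃'_i F₀⁻¹ D(F₀) + D( (Σ_i λ_i F̃'_i)/F₀ ) + α·( (Σ_i F'_i/F₀)·H₁ + D( Σ_i (λ'_i F'_i F₀ − (λ_i/2) F'_i²)/F₀² ) ) = 0. Then either F₀ divides F'_i − F'_j for all pairs i,j ∈ {1,2,3}, or there exist i ≠ j in {1,2,3} such that F₀ divides F'_i − F'_j and λ_i + λ_j = 0. -/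
open MvPolynomial Finset

set_option maxHeartbeats 1000000
set_option synthInstance.maxHeartbeats 1000000

lemma degree_one_single_s8 {N : ℕ} (m : Fin N →₀ ℕ) (hm : m.degree = 1) :
    ∃ j, m = Finsupp.single j 1 := by
  have hne : m.support.Nonempty := by
    rw [Finsupp.support_nonempty_iff]
    rintro rfl
    simp [Finsupp.degree] at hm
  obtain ⟨j, hj⟩ := hne
  have hmj : m j = 1 := by
    have h1 : 1 ≤ m j := Nat.one_le_iff_ne_zero.2 (Finsupp.mem_support_iff.1 hj)
    have h2 : m j ≤ m.degree := Finset.single_le_sum (fun i _ => Nat.zero_le _) hj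
    omega
  refine ⟨j, Finsupp.ext fun k => ?_⟩
  rcases eq_or_ne k j with rfl | hk
  · simp [hmj]
  · rw [Finsupp.single_eq_of_ne' (Ne.symm hk)]
    by_contra hk0
    have hks : k ∈ m.support := Finsupp.mem_support_iff.2 hk0
    have : m j + m k ≤ m.degree := by
      have : ({j, k} : Finset (Fin N)) ⊆ m.support := by
        intro t ht
        simp only [Finset.mem_insert, Finset.mem_singleton] at ht
        rcases ht with rfl | rfl <;> assumption
      calc m j + m k = ∑ t ∈ ({j, k} : Finset (Fin N)), m t := by
            rw [Finset.sum_pair hk.symm]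
        _ ≤ m.degree := Finset.sum_le_sum_of_subset this
    omega

lemma linear_rep {N : ℕ} {L : MvPolynomial (Fin N) ℂ} (hL : L.IsHomogeneous 1) :
    L = ∑ j, C (coeff (Finsupp.single j 1) L) * X j := by
  apply MvPolynomial.ext
  intro m
  rw [coeff_sum]
  simp only [coeff_C_mul, coeff_X']
  by_cases hex : ∃ j, Finsupp.single j 1 = m
  · obtain ⟨j₀, hj₀⟩ := hex
    rw [Finset.sum_eq_single j₀]
    · rw [if_pos hj₀, mul_one, hj₀]
    · intro b _ hb
      rw [if_neg, mul_zero]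
      intro hbm
      exact hb (by
        have := hbm.trans hj₀.symm
        exact (Finsupp.single_left_injective one_ne_zero) this)
    · intro h; exact absurd (Finset.mem_univ j₀) h
  · push_neg at hex
    have : coeff m L = 0 := by
      apply hL.coeff_eq_zero
      intro hd
      obtain ⟨j, hj⟩ := degree_one_single_s8 m hd
      exact hex j hj.symm
    rw [this]
    rw [Finset.sum_eq_zero]
    intro b _
    rw [if_neg (hex b), mul_zero]

lemma pderiv_linear {N : ℕ} {L : MvPolynomial (Fin (N + 1)) ℂ} (hL : L.IsHomogeneous 1)
    (j : Fin (N + 1)) : pderiv j L = C (coeff (Finsupp.single j 1) L) := by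
  conv_lhs => rw [linear_rep hL]
  rw [map_sum, Finset.sum_eq_single j]
  · rw [pderiv_C_mul, pderiv_X_self, mul_one]
  · intro b _ hb
    rw [pderiv_C_mul, pderiv_X_of_ne hb, mul_zero]
  · intro h; exact absurd (Finset.mem_univ j) h

lemma exists_coeff_ne_zero {N : ℕ} {L : MvPolynomial (Fin N) ℂ} (hL : L.IsHomogeneous 1)
    (hne : L ≠ 0) : ∃ j, coeff (Finsupp.single j 1) L ≠ 0 := by
  by_contra h
  push_neg at h
  apply hne
  rw [linear_rep hL]
  exact Finset.sum_eq_zero fun j _ => by rw [h j, map_zero, zero_mul]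

lemma eval_linear_s8 {N : ℕ} {L : MvPolynomial (Fin N) ℂ} (hL : L.IsHomogeneous 1)
    (p : Fin N → ℂ) : eval p L = ∑ j, coeff (Finsupp.single j 1) L * p j := by
  conv_lhs => rw [linear_rep hL]
  simp

lemma eval_linear_add {N : ℕ} {L : MvPolynomial (Fin N) ℂ} (hL : L.IsHomogeneous 1)
    (p r : Fin N → ℂ) : eval (p + r) L = eval p L + eval r L := by
  rw [eval_linear_s8 hL, eval_linear_s8 hL, eval_linear_s8 hL, ← Finset.sum_add_distrib]
  exact Finset.sum_congr rfl fun j _ => by simp [mul_add]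

lemma linear_smul_of_vanish {N : ℕ} {F₀ u : MvPolynomial (Fin N) ℂ}
    (hF₀ : F₀.IsHomogeneous 1) (hF₀ne : F₀ ≠ 0) (hu : u.IsHomogeneous 1)
    (h : ∀ p : Fin N → ℂ, eval p F₀ = 0 → eval p u = 0) :
    ∃ c : ℂ, u = C c * F₀ := by
  obtain ⟨j₀, hj₀⟩ := exists_coeff_ne_zero hF₀ hF₀ne
  have haj : coeff (Finsupp.single j₀ 1) F₀ ≠ 0 := hj₀
  set c : ℂ := coeff (Finsupp.single j₀ 1) u / coeff (Finsupp.single j₀ 1) F₀ with hcdef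
  refine ⟨c, ?_⟩
  have key : ∀ k, coeff (Finsupp.single k 1) u = c * coeff (Finsupp.single k 1) F₀ := by
    intro k
    set p : Fin N → ℂ := fun t => (if t = k then coeff (Finsupp.single j₀ 1) F₀ else 0) -
      (if t = j₀ then coeff (Finsupp.single k 1) F₀ else 0) with hp
    have hevF : eval p F₀ = 0 := by
      rw [eval_linear_s8 hF₀]
      simp only [hp, mul_sub, mul_ite, mul_zero, Finset.sum_sub_distrib,
        Finset.sum_ite_eq', Finset.mem_univ, if_true]
      ring
    have hevu := h p hevF
    rw [eval_linear_s8 hu] at hevu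
    simp only [hp, mul_sub, mul_ite, mul_zero, Finset.sum_sub_distrib,
      Finset.sum_ite_eq', Finset.mem_univ, if_true] at hevu
    rw [hcdef, div_mul_eq_mul_div, eq_div_iff haj]
    linear_combination hevu
  rw [linear_rep hu, linear_rep hF₀, Finset.mul_sum]
  refine Finset.sum_congr rfl fun k _ => ?_
  rw [← mul_assoc, ← map_mul, ← key k]

lemma dvd_split {N : ℕ} {F₀ u w : MvPolynomial (Fin N) ℂ}
    (hF₀ : F₀.IsHomogeneous 1) (hF₀ne : F₀ ≠ 0) (hu : u.IsHomogeneous 1)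
    (hw : w.IsHomogeneous 1) {μ : ℂ} (hdvd : F₀ ∣ C μ * u * w) :
    μ = 0 ∨ F₀ ∣ u ∨ F₀ ∣ w := by
  by_contra hcon
  push_neg at hcon
  obtain ⟨hμ, hu', hw'⟩ := hcon
  obtain ⟨p, hp0, hpu⟩ : ∃ p : Fin N → ℂ, eval p F₀ = 0 ∧ eval p u ≠ 0 := by
    by_contra h'
    push_neg at h'
    obtain ⟨c, hc⟩ := linear_smul_of_vanish hF₀ hF₀ne hu h'
    exact hu' ⟨C c, by rw [hc]; ring⟩
  obtain ⟨r, hr0, hrw⟩ : ∃ r : Fin N → ℂ, eval r F₀ = 0 ∧ eval r w ≠ 0 := by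
    by_contra h'
    push_neg at h'
    obtain ⟨c, hc⟩ := linear_smul_of_vanish hF₀ hF₀ne hw h'
    exact hw' ⟨C c, by rw [hc]; ring⟩
  obtain ⟨z, hz0, hzu, hzw⟩ : ∃ z : Fin N → ℂ,
      eval z F₀ = 0 ∧ eval z u ≠ 0 ∧ eval z w ≠ 0 := by
    rcases eq_or_ne (eval p w) 0 with hwp | hwp
    · rcases eq_or_ne (eval r u) 0 with hur | hur
      · refine ⟨p + r, ?_, ?_, ?_⟩
        · rw [eval_linear_add hF₀, hp0, hr0, add_zero]
        · rw [eval_linear_add hu, hur, add_zero]; exact hpu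
        · rw [eval_linear_add hw, hwp, zero_add]; exact hrw
      · exact ⟨r, hr0, hur, hrw⟩
    · exact ⟨p, hp0, hpu, hwp⟩
  obtain ⟨h, hh⟩ := hdvd
  have := congrArg (eval z) hh
  simp only [eval_mul, eval_C, hz0, zero_mul] at this
  exact (mul_ne_zero (mul_ne_zero hμ hzu) hzw) this

lemma dvd_split1 {N : ℕ} {F₀ u : MvPolynomial (Fin N) ℂ}
    (hF₀ : F₀.IsHomogeneous 1) (hF₀ne : F₀ ≠ 0) (hu : u.IsHomogeneous 1)
    {μ : ℂ} (hdvd : F₀ ∣ C μ * u) : μ = 0 ∨ F₀ ∣ u := by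
  rcases dvd_split hF₀ hF₀ne hu hu (hdvd.mul_right u) with h | h | h
  · exact Or.inl h
  · exact Or.inr h
  · exact Or.inr h

section Der
variable (n : ℕ) (j : Fin (n + 1))

/-- ring hom into the trivial square-zero extension recording value and j-th partial. -/
noncomputable def pphi : MvPolynomial (Fin (n + 1)) ℂ →+*
    TrivSqZeroExt (RatFunField n) (RatFunField n) where
  toFun a := ⟨toRat n a, toRat n (pderiv j a)⟩
  map_one' := by
    refine TrivSqZeroExt.ext ?_ ?_ <;> simp [pderiv_one]
  map_mul' a b := by
    refine TrivSqZeroExt.ext ?_ ?_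
    · simp [TrivSqZeroExt.fst_mul]
      rfl
    · simp [TrivSqZeroExt.snd_mul, pderiv_mul, smul_eq_mul, MulOpposite.smul_eq_mul_unop]
      show _ = toRat n a * toRat n (pderiv j b) + toRat n (pderiv j a) * toRat n b
      ring
  map_zero' := by
    refine TrivSqZeroExt.ext ?_ ?_ <;> simp
  map_add' a b := by
    refine TrivSqZeroExt.ext ?_ ?_ <;> simp <;> rfl

lemma pphi_isUnit : ∀ y : nonZeroDivisors (MvPolynomial (Fin (n + 1)) ℂ),
    IsUnit (pphi n j y) := by
  rintro ⟨y, hy⟩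
  rw [TrivSqZeroExt.isUnit_iff_isUnit_fst]
  have hy0 : y ≠ 0 := nonZeroDivisors.ne_zero hy
  have h1 : toRat n y ≠ 0 := fun h => hy0 <| IsFractionRing.injective
    (MvPolynomial (Fin (n + 1)) ℂ) (RatFunField n) (by rw [h, map_zero])
  have h2 : ((pphi n j) y).fst = toRat n y := rfl
  rw [h2]
  exact isUnit_iff_ne_zero.2 h1

noncomputable def Phi : RatFunField n →+* TrivSqZeroExt (RatFunField n) (RatFunField n) :=
  IsLocalization.lift (M := nonZeroDivisors (MvPolynomial (Fin (n + 1)) ℂ)) (pphi_isUnit n j)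

lemma Phi_toRat (a : MvPolynomial (Fin (n + 1)) ℂ) :
    Phi n j (toRat n a) = pphi n j a :=
  IsLocalization.lift_eq _ _

lemma Phi_fst (x : RatFunField n) : (Phi n j x).fst = x := by
  have : (TrivSqZeroExt.fstHom (RatFunField n) (RatFunField n)
        (RatFunField n)).toRingHom.comp (Phi n j) = RingHom.id _ := by
    apply IsLocalization.ringHom_ext (nonZeroDivisors (MvPolynomial (Fin (n + 1)) ℂ))
    refine RingHom.ext fun a => ?_
    show ((Phi n j) (toRat n a)).fst = toRat n a
    rw [Phi_toRat]
    rfl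
  exact RingHom.congr_fun this x

lemma Phi_smul (c : ℂ) (x : RatFunField n) :
    Phi n j (c • x) = Phi n j (toRat n (C c)) * Phi n j x := by
  rw [← map_mul]
  congr 1
  rw [← algebraMap_smul (RatFunField n) c x, smul_eq_mul,
    IsScalarTower.algebraMap_apply ℂ (MvPolynomial (Fin (n + 1)) ℂ) (RatFunField n)]
  rfl

noncomputable def derj : Derivation ℂ (RatFunField n) (RatFunField n) where
  toLinearMap :=
    { toFun := fun x => (Phi n j x).snd
      map_add' := fun x y => by
        show (Phi n j (x + y)).snd = (Phi n j x).snd + (Phi n j y).snd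
        rw [map_add, TrivSqZeroExt.snd_add]
      map_smul' := fun c x => by
        show (Phi n j (c • x)).snd = c • (Phi n j x).snd
        rw [Phi_smul, TrivSqZeroExt.snd_mul]
        have h1 : (Phi n j (toRat n (C c))).snd = 0 := by
          rw [Phi_toRat]
          show toRat n (pderiv j (C c)) = 0
          rw [pderiv_C, map_zero]
        have h2 : (Phi n j (toRat n (C c))).fst = toRat n (C c) := by
          rw [Phi_toRat]; rfl
        rw [h1, h2, smul_zero, add_zero,
          ← algebraMap_smul (RatFunField n) c (Phi n j x).snd, smul_eq_mul,
          IsScalarTower.algebraMap_apply ℂ (MvPolynomial (Fin (n + 1)) ℂ) (RatFunField n)]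
        rfl }
  map_one_eq_zero' := by
    show (Phi n j 1).snd = 0
    rw [map_one]
    rfl
  leibniz' := fun a b => by
    show (Phi n j (a * b)).snd = a • (Phi n j b).snd + b • (Phi n j a).snd
    rw [map_mul, TrivSqZeroExt.snd_mul, Phi_fst, Phi_fst, MulOpposite.smul_eq_mul_unop]
    simp [smul_eq_mul, mul_comm]

lemma derj_toRat (a : MvPolynomial (Fin (n + 1)) ℂ) :
    derj n j (toRat n a) = toRat n (pderiv j a) := by
  show (Phi n j (toRat n a)).snd = _
  rw [Phi_toRat]
  rfl

lemma derj_of_D_eq_zero {x : RatFunField n} (h : ratD n x = 0) : derj n j x = 0 := by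
  have := Derivation.liftKaehlerDifferential_comp_D (derj n j) x
  rw [show KaehlerDifferential.D ℂ (RatFunField n) x = ratD n x from rfl, h, map_zero] at this
  exact this.symm

lemma extract (A B : MvPolynomial (Fin (n + 1)) ℂ) (hB : B ≠ 0)
    (h : ratD n (toRat n A / toRat n B) = 0) :
    pderiv j A * B = A * pderiv j B := by
  have hBK : toRat n B ≠ 0 := fun h' => hB <| IsFractionRing.injective
    (MvPolynomial (Fin (n + 1)) ℂ) (RatFunField n) (by rw [h', map_zero])
  set q : RatFunField n := toRat n A / toRat n B with hq
  have hqB : q * toRat n B = toRat n A := div_mul_cancel₀ _ hBK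
  have h0 : derj n j q = 0 := derj_of_D_eq_zero n j h
  have hL : derj n j (q * toRat n B) = q * toRat n (pderiv j B) := by
    rw [Derivation.leibniz, h0, smul_zero, add_zero, smul_eq_mul, derj_toRat]
  rw [hqB, derj_toRat] at hL
  have hmul : toRat n (pderiv j A) * toRat n B = toRat n A * toRat n (pderiv j B) := by
    rw [hL, ← hqB]; ring
  have := IsFractionRing.injective (MvPolynomial (Fin (n + 1)) ℂ) (RatFunField n)
    (a₁ := pderiv j A * B) (a₂ := A * pderiv j B) (by rw [map_mul, map_mul]; exact hmul)
  exact this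

end Der

/-- key lemma for the second blow-up.  If the first-order term
`H₁ = Σᵢ λ'ᵢ F₀⁻¹ D F₀ + D ((Σᵢ λᵢ F'ᵢ)/F₀)` vanishes and so does
`Σᵢ λ̃'ᵢ F₀⁻¹ D F₀ + D ((Σᵢ λᵢ F̃'ᵢ)/F₀) + α ((Σᵢ F'ᵢ/F₀) H₁ +
D (Σᵢ (λ'ᵢ F'ᵢ F₀ − (λᵢ/2) F'ᵢ²)/F₀²))` with `α ≠ 0`, then either `F₀` divides
all differences `F'ᵢ − F'ⱼ`, or `F₀ ∣ F'ᵢ − F'ⱼ` and `λᵢ + λⱼ = 0` for some `i ≠ j`. -/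
theorem stmt_8 (n : ℕ) (hn : 1 ≤ n)
    (F₀ : MvPolynomial (Fin (n + 1)) ℂ) (hF₀ : F₀.IsHomogeneous 1) (hF₀ne : F₀ ≠ 0)
    (F' tF' : Fin 3 → MvPolynomial (Fin (n + 1)) ℂ)
    (hF' : ∀ i, (F' i).IsHomogeneous 1) (htF' : ∀ i, (tF' i).IsHomogeneous 1)
    (lam lam' tlam : Fin 3 → ℂ)
    (hlamne : lam ≠ 0) (hlam : lam 0 + lam 1 + lam 2 = 0)
    (hlam' : ∑ i, lam' i = 0) (htlam : ∑ i, tlam i = 0)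
    (α : ℂ) (hα : α ≠ 0)
    (H₁ : KaehlerDifferential ℂ (RatFunField n))
    (hH₁def : H₁ = (∑ i, lam' i) • ((toRat n F₀)⁻¹ • ratD n (toRat n F₀)) +
      ratD n (toRat n (∑ i, C (lam i) * F' i) / toRat n F₀))
    (hH₁ : H₁ = 0)
    (hii : (∑ i, tlam i) • ((toRat n F₀)⁻¹ • ratD n (toRat n F₀)) +
        ratD n (toRat n (∑ i, C (lam i) * tF' i) / toRat n F₀) +
        α • ((∑ i, toRat n (F' i) / toRat n F₀) • H₁ +
          ratD n (toRat n (∑ i, (C (lam' i) * F' i * F₀ - C (lam i / 2) * F' i ^ 2)) /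
            toRat n F₀ ^ 2)) = 0) :
    (∀ i j : Fin 3, F₀ ∣ F' i - F' j) ∨
      (∃ i j : Fin 3, i ≠ j ∧ F₀ ∣ F' i - F' j ∧ lam i + lam j = 0) := by
  have hFK : toRat n F₀ ≠ 0 := fun h' => hF₀ne <| IsFractionRing.injective
    (MvPolynomial (Fin (n + 1)) ℂ) (RatFunField n) (by rw [h', map_zero])
  -- first-order information
  rw [hlam', zero_smul, zero_add] at hH₁def
  have h1 : ratD n (toRat n (∑ i, C (lam i) * F' i) / toRat n F₀) = 0 :=
    hH₁def.symm.trans hH₁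
  -- second-order information
  rw [htlam, zero_smul, zero_add, hH₁, smul_zero, zero_add] at hii
  have hαy : ∀ y : RatFunField n, α • y = toRat n (C α) * y := fun y => by
    rw [← algebraMap_smul (RatFunField n) α y, smul_eq_mul,
      IsScalarTower.algebraMap_apply ℂ (MvPolynomial (Fin (n + 1)) ℂ) (RatFunField n)]
    rfl
  have hK : toRat n ((∑ i, C (lam i) * tF' i) * F₀ +
        C α * (∑ i, (C (lam' i) * F' i * F₀ - C (lam i / 2) * F' i ^ 2))) / toRat n (F₀ ^ 2) =
      toRat n (∑ i, C (lam i) * tF' i) / toRat n F₀ +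
        α • (toRat n (∑ i, (C (lam' i) * F' i * F₀ - C (lam i / 2) * F' i ^ 2)) /
          toRat n F₀ ^ 2) := by
    rw [map_add, map_mul, map_mul, map_pow, hαy]
    field_simp
  have hA : ratD n (toRat n ((∑ i, C (lam i) * tF' i) * F₀ +
      C α * (∑ i, (C (lam' i) * F' i * F₀ - C (lam i / 2) * F' i ^ 2))) / toRat n (F₀ ^ 2))
      = 0 := by
    rw [hK, map_add, map_smul]
    exact hii
  -- choose a direction in which F₀ has nonzero derivative
  obtain ⟨j, hcj⟩ := exists_coeff_ne_zero hF₀ hF₀ne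
  set cj : ℂ := coeff (Finsupp.single j 1) F₀ with hcjdef
  have hdF₀ : pderiv j F₀ = C cj := pderiv_linear hF₀ j
  -- F₀ divides the linear combination
  have e1 := extract n j (∑ i, C (lam i) * F' i) F₀ hF₀ne h1
  rw [hdF₀] at e1
  have hCinv : (C cj⁻¹ * C cj : MvPolynomial (Fin (n + 1)) ℂ) = 1 := by
    rw [← map_mul, inv_mul_cancel₀ hcj, map_one]
  have hdvdLp : F₀ ∣ ∑ i, C (lam i) * F' i := by
    refine ⟨C cj⁻¹ * pderiv j (∑ i, C (lam i) * F' i), ?_⟩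
    linear_combination (- (∑ i, C (lam i) * F' i)) * hCinv -
      (C cj⁻¹ : MvPolynomial (Fin (n + 1)) ℂ) * e1
  -- F₀ divides G
  have e2 := extract n j ((∑ i, C (lam i) * tF' i) * F₀ +
      C α * (∑ i, (C (lam' i) * F' i * F₀ - C (lam i / 2) * F' i ^ 2))) (F₀ ^ 2)
      (pow_ne_zero 2 hF₀ne) hA
  have hdF₀2 : pderiv j (F₀ ^ 2) = C cj * F₀ + F₀ * C cj := by
    rw [pow_two, pderiv_mul, hdF₀]
  rw [hdF₀2] at e2
  set A : MvPolynomial (Fin (n + 1)) ℂ := (∑ i, C (lam i) * tF' i) * F₀ +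
      C α * (∑ i, (C (lam' i) * F' i * F₀ - C (lam i / 2) * F' i ^ 2)) with hAdef
  have e2' : pderiv j A * F₀ = A * (C cj + C cj) :=
    mul_right_cancel₀ hF₀ne (by linear_combination e2)
  have hC2 : (C ((2 * cj)⁻¹) * (C cj + C cj) : MvPolynomial (Fin (n + 1)) ℂ) = 1 := by
    rw [← map_add, ← map_mul, show (2 * cj)⁻¹ * (cj + cj) = 1 by
      rw [show cj + cj = 2 * cj by ring]
      exact inv_mul_cancel₀ (mul_ne_zero two_ne_zero hcj), map_one]
  have hdvdA : F₀ ∣ A := by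
    refine ⟨C ((2 * cj)⁻¹) * pderiv j A, ?_⟩
    linear_combination (-A) * hC2 - (C ((2 * cj)⁻¹) : MvPolynomial (Fin (n + 1)) ℂ) * e2' 
  have hdvdαG : F₀ ∣ C α * (∑ i, (C (lam' i) * F' i * F₀ - C (lam i / 2) * F' i ^ 2)) := by
    have hAG : C α * (∑ i, (C (lam' i) * F' i * F₀ - C (lam i / 2) * F' i ^ 2)) =
        A - (∑ i, C (lam i) * tF' i) * F₀ := by rw [hAdef]; ring
    rw [hAG]
    exact dvd_sub hdvdA (dvd_mul_left F₀ _)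
  have hCαinv : (C α⁻¹ * C α : MvPolynomial (Fin (n + 1)) ℂ) = 1 := by
    rw [← map_mul, inv_mul_cancel₀ hα, map_one]
  have hdvdG : F₀ ∣ ∑ i, (C (lam' i) * F' i * F₀ - C (lam i / 2) * F' i ^ 2) := by
    obtain ⟨k, hk⟩ := hdvdαG
    refine ⟨C α⁻¹ * k, ?_⟩
    linear_combination (C α⁻¹ : MvPolynomial (Fin (n + 1)) ℂ) * hk -
      (∑ i, (C (lam' i) * F' i * F₀ - C (lam i / 2) * F' i ^ 2)) * hCαinv
  
  -- hence F₀ divides the quadratic combination S = ∑ C (lam i) * F' i ^ 2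
  have hChalf : ∀ i : Fin 3, (C 2 * C (lam i / 2) : MvPolynomial (Fin (n + 1)) ℂ) =
      C (lam i) := fun i => by rw [← map_mul]; congr 1; ring
  have hdvdS : F₀ ∣ ∑ i, C (lam i) * F' i ^ 2 := by
    have hS2 : F₀ ∣ ∑ i, C (lam i / 2) * F' i ^ 2 := by
      have : (∑ i, C (lam i / 2) * F' i ^ 2 : MvPolynomial (Fin (n + 1)) ℂ) =
          (∑ i, C (lam' i) * F' i) * F₀ -
            ∑ i, (C (lam' i) * F' i * F₀ - C (lam i / 2) * F' i ^ 2) := by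
        rw [Fin.sum_univ_three, Fin.sum_univ_three, Fin.sum_univ_three]
        ring
      rw [this]
      exact dvd_sub (dvd_mul_left F₀ _) hdvdG
    have hSS : (∑ i, C (lam i) * F' i ^ 2 : MvPolynomial (Fin (n + 1)) ℂ) =
        C 2 * ∑ i, C (lam i / 2) * F' i ^ 2 := by
      rw [Finset.mul_sum]
      exact Finset.sum_congr rfl fun i _ => by rw [← mul_assoc, hChalf]
    rw [hSS]
    exact hS2.mul_left _
  -- expand the sums
  rw [Fin.sum_univ_three] at hdvdLp hdvdS
  have hCsum : (C (lam 0) + C (lam 1) + C (lam 2) : MvPolynomial (Fin (n + 1)) ℂ) = 0 := by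
    rw [← map_add, ← map_add, hlam, map_zero]
  -- the two key product divisibilities
  have fact0 : F₀ ∣ C (lam 0) * (F' 0 - F' 1) * (F' 0 - F' 2) := by
    have heq : C (lam 0) * (F' 0 - F' 1) * (F' 0 - F' 2) =
        (C (lam 0) * F' 0 ^ 2 + C (lam 1) * F' 1 ^ 2 + C (lam 2) * F' 2 ^ 2) -
          (F' 1 + F' 2) * (C (lam 0) * F' 0 + C (lam 1) * F' 1 + C (lam 2) * F' 2) := by
      linear_combination (F' 1 * F' 2) * hCsum
    rw [heq]
    exact dvd_sub hdvdS (hdvdLp.mul_left _)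
  have fact1 : F₀ ∣ C (lam 1) * (F' 1 - F' 0) * (F' 1 - F' 2) := by
    have heq : C (lam 1) * (F' 1 - F' 0) * (F' 1 - F' 2) =
        (C (lam 0) * F' 0 ^ 2 + C (lam 1) * F' 1 ^ 2 + C (lam 2) * F' 2 ^ 2) -
          (F' 0 + F' 2) * (C (lam 0) * F' 0 + C (lam 1) * F' 1 + C (lam 2) * F' 2) := by
      linear_combination (F' 0 * F' 2) * hCsum
    rw [heq]
    exact dvd_sub hdvdS (hdvdLp.mul_left _)
  have factL : F₀ ∣ C (lam 0) * (F' 0 - F' 2) + C (lam 1) * (F' 1 - F' 2) := by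
    have heq : C (lam 0) * (F' 0 - F' 2) + C (lam 1) * (F' 1 - F' 2) =
        (C (lam 0) * F' 0 + C (lam 1) * F' 1 + C (lam 2) * F' 2) -
          (C (lam 0) + C (lam 1) + C (lam 2)) * F' 2 := by ring
    rw [heq, hCsum, zero_mul, sub_zero]
    exact hdvdLp
  -- case analysis
  by_cases h01 : F₀ ∣ F' 0 - F' 1
  · by_cases h02 : F₀ ∣ F' 0 - F' 2
    · left
      intro i k
      have h0 : ∀ m : Fin 3, F₀ ∣ F' 0 - F' m := by
        intro m
        fin_cases m
        · simp
        · exact h01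
        · exact h02
      have h := dvd_sub (h0 k) (h0 i)
      rw [show F' 0 - F' k - (F' 0 - F' i) = F' i - F' k by ring] at h
      exact h
    · have hcomb : F₀ ∣ C (lam 0 + lam 1) * (F' 0 - F' 2) := by
        have heq : C (lam 0 + lam 1) * (F' 0 - F' 2) =
            (C (lam 0) * (F' 0 - F' 2) + C (lam 1) * (F' 1 - F' 2)) +
              C (lam 1) * (F' 0 - F' 1) := by
          rw [map_add]; ring
        rw [heq]
        exact dvd_add factL (h01.mul_left _)
      rcases dvd_split1 hF₀ hF₀ne ((hF' 0).sub (hF' 2)) hcomb with hz | hz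
      · exact Or.inr ⟨0, 1, by decide, h01, hz⟩
      · exact absurd hz h02
  · have hs0 : lam 0 = 0 ∨ F₀ ∣ F' 0 - F' 2 := by
      rcases dvd_split hF₀ hF₀ne ((hF' 0).sub (hF' 1)) ((hF' 0).sub (hF' 2)) fact0 with
        h | h | h
      · exact Or.inl h
      · exact absurd h h01
      · exact Or.inr h
    have hs1 : lam 1 = 0 ∨ F₀ ∣ F' 1 - F' 2 := by
      rcases dvd_split hF₀ hF₀ne ((hF' 1).sub (hF' 0)) ((hF' 1).sub (hF' 2)) fact1 with
        h | h | h
      · exact Or.inl h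
      · exact absurd (by rw [show F' 0 - F' 1 = -(F' 1 - F' 0) by ring]; exact h.neg_right) h01
      · exact Or.inr h
    rcases hs0 with l0 | h02 <;> rcases hs1 with l1 | h12
    · exfalso
      apply hlamne
      have l2 : lam 2 = 0 := by linear_combination hlam - l0 - l1
      funext i
      fin_cases i
      · exact l0
      · exact l1
      · exact l2
    · exact Or.inr ⟨1, 2, by decide, h12, by linear_combination hlam - l0⟩
    · exact Or.inr ⟨0, 2, by decide, h02, by linear_combination hlam - l1⟩
    · exfalso
      apply h01
      have h := dvd_sub h02 h12
      rw [show F' 0 - F' 2 - (F' 1 - F' 2) = F' 0 - F' 1 by ring] at h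
      exact h
end

section
/- (Set-theoretic base locus of the type (1,1,1) parametrization.) Let n ≥ 3, let λ = (λ₁,λ₂,λ₃) ∈ ℂ³ be nonzero with λ₁ + λ₂ + λ₃ = 0, and let F₁, F₂, F₃ be nonzero linear forms in MvPolynomial (Fin (n+1)) ℂ. Then the coefficients of the logarithmic form all vanish, i.e. λ₁·F₂F₃·∂_k F₁ + λ₂·F₁F₃·∂_k F₂ + λ₃·F₁F₂·∂_k F₃ = 0 for every k ∈ {0,…,n}, if and only if one of the following holds: (a) F₁, F₂, F₃ are pairwise linearly dependent (i.e. each is a nonzero scalar multiple of F₁); (b) λ₁ = 0 and F₂, F₃ are linearly dependent; (c) λ₂ = 0 and F₁, F₃ are linearly dependent; (d) λ₃ = 0 and F₁, F₂ are linearly dependent. -/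
open MvPolynomial

lemma deg_one_single {m : ℕ} {d : Fin m →₀ ℕ} (h : d.degree = 1) :
    ∃ k, d = Finsupp.single k 1 := by
  have hne : d.support.Nonempty := by
    rw [Finset.nonempty_iff_ne_empty]
    intro he
    simp [Finsupp.degree_apply, he] at h
  obtain ⟨k, hk⟩ := hne
  have hdk : d k = 1 := by
    have h1 : 1 ≤ d k := Nat.one_le_iff_ne_zero.mpr (Finsupp.mem_support_iff.mp hk)
    have h2 := Finsupp.le_degree k d
    omega
  refine ⟨k, ?_⟩
  ext j
  rcases eq_or_ne j k with rfl | hjk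
  · simp [hdk]
  · simp only [Finsupp.single_apply, if_neg (Ne.symm hjk)]
    by_contra hj
    have hj' : j ∈ d.support := Finsupp.mem_support_iff.mpr hj
    have : d k + d j ≤ d.degree := by
      rw [Finsupp.degree]
      have : ({k, j} : Finset (Fin m)).sum d ≤ d.support.sum d :=
        Finset.sum_le_sum_of_subset (by
          intro x hx
          simp only [Finset.mem_insert, Finset.mem_singleton] at hx
          rcases hx with rfl | rfl <;> assumption)
      rwa [Finset.sum_insert (by simpa using Ne.symm hjk), Finset.sum_singleton] at this
    omega

lemma rep_of_homog {m : ℕ} {F : MvPolynomial (Fin m) ℂ} (hF : F.IsHomogeneous 1) :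
    F = ∑ k : Fin m, C (coeff (Finsupp.single k 1) F) * X k := by
  ext d
  rw [coeff_sum]
  simp only [coeff_C_mul, coeff_X']
  rcases eq_or_ne d.degree 1 with hd | hd
  · obtain ⟨k, rfl⟩ := deg_one_single hd
    rw [Finset.sum_eq_single k]
    · simp
    · intro j _ hjk
      rw [if_neg, mul_zero]
      intro hc
      exact hjk ((Finsupp.single_left_inj one_ne_zero).mp hc)
    · simp
  · have h0 : coeff d F = 0 := by
      by_contra hc
      apply hd
      rw [Finsupp.degree_eq_weight_one]
      exact hF hc
    rw [h0]
    symm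
    apply Finset.sum_eq_zero
    intro j _
    rw [if_neg, mul_zero]
    intro hc
    apply hd
    rw [← hc]
    simp [Finsupp.degree_single]

lemma pderiv_eq {m : ℕ} {F : MvPolynomial (Fin m) ℂ} (hF : F.IsHomogeneous 1) (k : Fin m) :
    pderiv k F = C (coeff (Finsupp.single k 1) F) := by
  conv_lhs => rw [rep_of_homog hF]
  rw [map_sum]
  rw [Finset.sum_eq_single k]
  · simp
  · intro j _ hjk
    simp [pderiv_X, Pi.single_apply, if_neg hjk]
  · simp

lemma eval_rep {m : ℕ} {F : MvPolynomial (Fin m) ℂ} (hF : F.IsHomogeneous 1) (p : Fin m → ℂ) :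
    eval p F = ∑ k, coeff (Finsupp.single k 1) F * p k := by
  conv_lhs => rw [rep_of_homog hF]
  simp

lemma smul_iff {m : ℕ} {F G : MvPolynomial (Fin m) ℂ} (hF : F.IsHomogeneous 1)
    (hG : G.IsHomogeneous 1) (c : ℂ) :
    G = c • F ↔ ∀ k, coeff (Finsupp.single k 1) G = c * coeff (Finsupp.single k 1) F := by
  constructor
  · rintro rfl k
    simp [coeff_smul, smul_eq_mul]
  · intro h
    rw [rep_of_homog hG, rep_of_homog hF, Finset.smul_sum]
    refine Finset.sum_congr rfl fun k _ => ?_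
    rw [h k, smul_eq_C_mul, ← mul_assoc, ← C_mul]

lemma coeff_ne {m : ℕ} {F : MvPolynomial (Fin m) ℂ} (hF : F.IsHomogeneous 1) (hne : F ≠ 0) :
    (fun k => coeff (Finsupp.single k 1) F) ≠ 0 := by
  intro h
  apply hne
  rw [rep_of_homog hF]
  apply Finset.sum_eq_zero
  intro k _
  have : coeff (Finsupp.single k 1) F = 0 := congrFun h k
  simp [this]

lemma ker_incl {m : ℕ} {b c : Fin m → ℂ} (hb : b ≠ 0)
    (h : ∀ p : Fin m → ℂ, (∑ j, b j * p j) = 0 → (∑ j, c j * p j) = 0) :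
    ∃ d : ℂ, ∀ k, c k = d * b k := by
  obtain ⟨k₀, hk₀⟩ : ∃ k, b k ≠ 0 := by
    by_contra hc; push_neg at hc; exact hb (funext hc)
  refine ⟨c k₀ / b k₀, fun k => ?_⟩
  have hp := h (fun j => b k₀ * (if j = k then 1 else 0) - b k * (if j = k₀ then 1 else 0)) ?_
  · simp only [mul_sub, mul_ite, mul_one, mul_zero, Finset.sum_sub_distrib,
      Finset.sum_ite_eq', Finset.mem_univ, if_true] at hp
    rw [div_mul_eq_mul_div, eq_div_iff hk₀]
    linear_combination hp
  · simp only [mul_sub, mul_ite, mul_one, mul_zero, Finset.sum_sub_distrib,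
      Finset.sum_ite_eq', Finset.mem_univ, if_true]
    ring

lemma key {m : ℕ} {l₁ l₂ l₃ : ℂ} {b₁ b₂ b₃ : Fin m → ℂ}
    (hb₁ : b₁ ≠ 0) (hb₂ : b₂ ≠ 0) (hb₃ : b₃ ≠ 0) (hl : l₁ ≠ 0)
    (H : ∀ (k : Fin m) (p : Fin m → ℂ),
      l₁ * b₁ k * ((∑ j, b₂ j * p j) * (∑ j, b₃ j * p j)) +
      l₂ * b₂ k * ((∑ j, b₁ j * p j) * (∑ j, b₃ j * p j)) +
      l₃ * b₃ k * ((∑ j, b₁ j * p j) * (∑ j, b₂ j * p j)) = 0) :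
    (∃ c : ℂ, c ≠ 0 ∧ ∀ k, b₂ k = c * b₁ k) ∨ (∃ c : ℂ, c ≠ 0 ∧ ∀ k, b₃ k = c * b₁ k) := by
  by_contra hcon
  push_neg at hcon
  obtain ⟨h2, h3⟩ := hcon
  have exu : ∃ u : Fin m → ℂ, (∑ j, b₁ j * u j) = 0 ∧ (∑ j, b₂ j * u j) ≠ 0 := by
    by_contra hc
    push_neg at hc
    obtain ⟨d, hd⟩ := ker_incl hb₁ hc
    have hd0 : d ≠ 0 := by
      intro h
      apply hb₂
      funext k
      simp [hd k, h]
    obtain ⟨k, hk⟩ := h2 d hd0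
    exact hk (hd k)
  have exv : ∃ v : Fin m → ℂ, (∑ j, b₁ j * v j) = 0 ∧ (∑ j, b₃ j * v j) ≠ 0 := by
    by_contra hc
    push_neg at hc
    obtain ⟨d, hd⟩ := ker_incl hb₁ hc
    have hd0 : d ≠ 0 := by
      intro h
      apply hb₃
      funext k
      simp [hd k, h]
    obtain ⟨k, hk⟩ := h3 d hd0
    exact hk (hd k)
  obtain ⟨u, hu1, hu2⟩ := exu
  obtain ⟨v, hv1, hv3⟩ := exv
  obtain ⟨p, hp1, hp2, hp3⟩ :
      ∃ p : Fin m → ℂ, (∑ j, b₁ j * p j) = 0 ∧ (∑ j, b₂ j * p j) ≠ 0 ∧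
        (∑ j, b₃ j * p j) ≠ 0 := by
    by_cases hu3 : (∑ j, b₃ j * u j) ≠ 0
    · exact ⟨u, hu1, hu2, hu3⟩
    push_neg at hu3
    by_cases hv2 : (∑ j, b₂ j * v j) ≠ 0
    · exact ⟨v, hv1, hv2, hv3⟩
    push_neg at hv2
    refine ⟨u + v, ?_, ?_, ?_⟩
    · simp only [Pi.add_apply, mul_add, Finset.sum_add_distrib, hu1, hv1, add_zero]
    · simp only [Pi.add_apply, mul_add, Finset.sum_add_distrib, hv2, add_zero]
      exact hu2
    · simp only [Pi.add_apply, mul_add, Finset.sum_add_distrib, hu3, zero_add]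
      exact hv3
  apply hb₁
  funext k
  have := H k p
  rw [hp1] at this
  simp only [mul_zero, zero_mul, add_zero] at this
  have h1 : l₁ * b₁ k * ((∑ j, b₂ j * p j) * (∑ j, b₃ j * p j)) = 0 := by
    linear_combination this
  rcases mul_eq_zero.mp h1 with h | h
  · rcases mul_eq_zero.mp h with h' | h'
    · exact absurd h' hl
    · exact h'
  · rcases mul_eq_zero.mp h with h' | h'
    · exact absurd h' hp2
    · exact absurd h' hp3

def Prp {m : ℕ} (a b : Fin m → ℂ) : Prop := ∃ c : ℂ, c ≠ 0 ∧ ∀ k, a k = c * b k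

lemma Prp.symm {m : ℕ} {a b : Fin m → ℂ} (h : Prp a b) : Prp b a := by
  obtain ⟨c, hc, h⟩ := h
  exact ⟨c⁻¹, inv_ne_zero hc, fun k => by rw [h k]; field_simp⟩

lemma Prp.trans {m : ℕ} {a b c : Fin m → ℂ} (h : Prp a b) (h' : Prp b c) : Prp a c := by
  obtain ⟨d, hd, h⟩ := h
  obtain ⟨e, he, h'⟩ := h'
  exact ⟨d * e, mul_ne_zero hd he, fun k => by rw [h k, h' k]; ring⟩

/-- set-theoretic base locus of the type `(1,1,1)` parametrization.
For `n ≥ 3`, nonzero `λ ∈ ℂ³` with `λ₁ + λ₂ + λ₃ = 0` and nonzero linear forms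
`F₁, F₂, F₃`, all coefficients `λ₁ F₂F₃ ∂ₖF₁ + λ₂ F₁F₃ ∂ₖF₂ + λ₃ F₁F₂ ∂ₖF₃` vanish
iff (a) `F₁, F₂, F₃` are pairwise linearly dependent, or (b) `λ₁ = 0` and `F₂, F₃` are
linearly dependent, or (c) `λ₂ = 0` and `F₁, F₃` are linearly dependent, or
(d) `λ₃ = 0` and `F₁, F₂` are linearly dependent. -/
theorem stmt_11 (n : ℕ) (hn : 3 ≤ n)
    (l₁ l₂ l₃ : ℂ) (hlamne : ¬(l₁ = 0 ∧ l₂ = 0 ∧ l₃ = 0)) (hlam : l₁ + l₂ + l₃ = 0)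
    (F₁ F₂ F₃ : MvPolynomial (Fin (n + 1)) ℂ)
    (hF₁ : F₁.IsHomogeneous 1) (hF₂ : F₂.IsHomogeneous 1) (hF₃ : F₃.IsHomogeneous 1)
    (hF₁ne : F₁ ≠ 0) (hF₂ne : F₂ ≠ 0) (hF₃ne : F₃ ≠ 0) :
    (∀ k : Fin (n + 1),
        C l₁ * (F₂ * F₃) * pderiv k F₁ + C l₂ * (F₁ * F₃) * pderiv k F₂ +
          C l₃ * (F₁ * F₂) * pderiv k F₃ = 0) ↔
      ((∃ c₂ c₃ : ℂ, c₂ ≠ 0 ∧ c₃ ≠ 0 ∧ F₂ = c₂ • F₁ ∧ F₃ = c₃ • F₁) ∨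
        (l₁ = 0 ∧ ∃ c : ℂ, c ≠ 0 ∧ F₃ = c • F₂) ∨
        (l₂ = 0 ∧ ∃ c : ℂ, c ≠ 0 ∧ F₃ = c • F₁) ∨
        (l₃ = 0 ∧ ∃ c : ℂ, c ≠ 0 ∧ F₂ = c • F₁)) := by
  set a₁ : Fin (n+1) → ℂ := fun k => coeff (Finsupp.single k 1) F₁ with ha₁
  set a₂ : Fin (n+1) → ℂ := fun k => coeff (Finsupp.single k 1) F₂ with ha₂
  set a₃ : Fin (n+1) → ℂ := fun k => coeff (Finsupp.single k 1) F₃ with ha₃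
  have hb₁ : a₁ ≠ 0 := coeff_ne hF₁ hF₁ne
  have hb₂ : a₂ ≠ 0 := coeff_ne hF₂ hF₂ne
  have hb₃ : a₃ ≠ 0 := coeff_ne hF₃ hF₃ne
  have conv21 : Prp a₂ a₁ → ∃ c : ℂ, c ≠ 0 ∧ F₂ = c • F₁ := by
    rintro ⟨c, hc, h⟩; exact ⟨c, hc, (smul_iff hF₁ hF₂ c).mpr h⟩
  have conv31 : Prp a₃ a₁ → ∃ c : ℂ, c ≠ 0 ∧ F₃ = c • F₁ := by
    rintro ⟨c, hc, h⟩; exact ⟨c, hc, (smul_iff hF₁ hF₃ c).mpr h⟩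
  have conv32 : Prp a₃ a₂ → ∃ c : ℂ, c ≠ 0 ∧ F₃ = c • F₂ := by
    rintro ⟨c, hc, h⟩; exact ⟨c, hc, (smul_iff hF₂ hF₃ c).mpr h⟩
  constructor
  · intro hyp
    have H : ∀ (k : Fin (n+1)) (p : Fin (n+1) → ℂ),
        l₁ * a₁ k * ((∑ j, a₂ j * p j) * (∑ j, a₃ j * p j)) +
        l₂ * a₂ k * ((∑ j, a₁ j * p j) * (∑ j, a₃ j * p j)) +
        l₃ * a₃ k * ((∑ j, a₁ j * p j) * (∑ j, a₂ j * p j)) = 0 := by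
      intro k p
      have h0 := congrArg (eval p) (hyp k)
      rw [pderiv_eq hF₁, pderiv_eq hF₂, pderiv_eq hF₃] at h0
      simp only [map_add, map_mul, eval_C, map_zero] at h0
      rw [eval_rep hF₁, eval_rep hF₂, eval_rep hF₃] at h0
      linear_combination h0
    by_cases h1 : l₁ = 0
    · have h2 : l₂ ≠ 0 := fun h => hlamne ⟨h1, h, by linear_combination hlam - h1 - h⟩
      have h3 : l₃ ≠ 0 := fun h => hlamne ⟨h1, by linear_combination hlam - h1 - h, h⟩
      have K₂ : Prp a₁ a₂ ∨ Prp a₃ a₂ :=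
        key (l₂ := l₁) (l₃ := l₃) hb₂ hb₁ hb₃ h2 (fun k p => by linear_combination H k p)
      have K₃ : Prp a₁ a₃ ∨ Prp a₂ a₃ :=
        key (l₂ := l₁) (l₃ := l₂) hb₃ hb₁ hb₂ h3 (fun k p => by linear_combination H k p)
      refine Or.inr (Or.inl ⟨h1, conv32 ?_⟩)
      rcases K₂ with h | h
      · rcases K₃ with h' | h'
        · exact h'.symm.trans h
        · exact h'.symm
      · exact h
    by_cases h2 : l₂ = 0
    · have h3 : l₃ ≠ 0 := fun h => hlamne ⟨by linear_combination hlam - h2 - h, h2, h⟩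
      have K₁ : Prp a₂ a₁ ∨ Prp a₃ a₁ := key hb₁ hb₂ hb₃ h1 H
      have K₃ : Prp a₁ a₃ ∨ Prp a₂ a₃ :=
        key (l₂ := l₁) (l₃ := l₂) hb₃ hb₁ hb₂ h3 (fun k p => by linear_combination H k p)
      refine Or.inr (Or.inr (Or.inl ⟨h2, conv31 ?_⟩))
      rcases K₁ with h | h
      · rcases K₃ with h' | h'
        · exact h'.symm
        · exact h'.symm.trans h
      · exact h
    by_cases h3 : l₃ = 0
    · have K₁ : Prp a₂ a₁ ∨ Prp a₃ a₁ := key hb₁ hb₂ hb₃ h1 H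
      have K₂ : Prp a₁ a₂ ∨ Prp a₃ a₂ :=
        key (l₂ := l₁) (l₃ := l₃) hb₂ hb₁ hb₃ h2 (fun k p => by linear_combination H k p)
      refine Or.inr (Or.inr (Or.inr ⟨h3, conv21 ?_⟩))
      rcases K₁ with h | h
      · exact h
      · rcases K₂ with h' | h'
        · exact h'.symm
        · exact h'.symm.trans h
    · have K₁ : Prp a₂ a₁ ∨ Prp a₃ a₁ := key hb₁ hb₂ hb₃ h1 H
      have K₂ : Prp a₁ a₂ ∨ Prp a₃ a₂ :=
        key (l₂ := l₁) (l₃ := l₃) hb₂ hb₁ hb₃ h2 (fun k p => by linear_combination H k p)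
      have K₃ : Prp a₁ a₃ ∨ Prp a₂ a₃ :=
        key (l₂ := l₁) (l₃ := l₂) hb₃ hb₁ hb₂ h3 (fun k p => by linear_combination H k p)
      refine Or.inl ?_
      have h21 : Prp a₂ a₁ := by
        rcases K₁ with h | h
        · exact h
        · rcases K₂ with h' | h'
          · exact h'.symm
          · exact h'.symm.trans h
      have h31 : Prp a₃ a₁ := by
        rcases K₁ with h | h
        · rcases K₃ with h' | h'
          · exact h'.symm
          · exact h'.symm.trans h
        · exact h
      obtain ⟨c₂, hc₂, hh₂⟩ := conv21 h21
      obtain ⟨c₃, hc₃, hh₃⟩ := conv31 h31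
      exact ⟨c₂, c₃, hc₂, hc₃, hh₂, hh₃⟩
  · rintro (⟨c₂, c₃, hc₂, hc₃, rfl, rfl⟩ | ⟨hl1, c, hc, rfl⟩ | ⟨hl2, c, hc, rfl⟩ |
      ⟨hl3, c, hc, rfl⟩) <;> intro k <;>
      simp only [smul_eq_C_mul, pderiv_C_mul]
    · have hC : (C l₁ + C l₂ + C l₃ : MvPolynomial (Fin (n+1)) ℂ) = 0 := by
        rw [← C_add, ← C_add, hlam, C_0]
      linear_combination (C c₂ * C c₃ * F₁ * F₁ * pderiv k F₁ : MvPolynomial (Fin (n+1)) ℂ) * hC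
    · have hC1 : (C l₁ : MvPolynomial (Fin (n+1)) ℂ) = 0 := by rw [hl1, C_0]
      have hC : (C l₂ + C l₃ : MvPolynomial (Fin (n+1)) ℂ) = 0 := by
        rw [← C_add, show l₂ + l₃ = 0 by linear_combination hlam - hl1, C_0]
      linear_combination (F₂ * (C c * F₂) * pderiv k F₁) * hC1 +
        (C c * F₁ * F₂ * pderiv k F₂) * hC
    · have hC2 : (C l₂ : MvPolynomial (Fin (n+1)) ℂ) = 0 := by rw [hl2, C_0]
      have hC : (C l₁ + C l₃ : MvPolynomial (Fin (n+1)) ℂ) = 0 := by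
        rw [← C_add, show l₁ + l₃ = 0 by linear_combination hlam - hl2, C_0]
      linear_combination (F₁ * (C c * F₁) * pderiv k F₂) * hC2 +
        (C c * F₁ * F₂ * pderiv k F₁) * hC
    · have hC3 : (C l₃ : MvPolynomial (Fin (n+1)) ℂ) = 0 := by rw [hl3, C_0]
      have hC : (C l₁ + C l₂ + C l₃ : MvPolynomial (Fin (n+1)) ℂ) = 0 := by
        rw [← C_add, ← C_add, hlam, C_0]
      linear_combination (C c * F₁ * F₃ * pderiv k F₁) * hC +
        (C c * F₁ * F₁ * pderiv k F₃ - C c * F₁ * F₃ * pderiv k F₁) * hC3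
end
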